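/- arXiv:1309.2399 — 6 statements merged into one kernel-verified Lean document; each statement's English description precedes it below -/
import Mathlib

section
/- Let G be a connected finite simple graph with a split between A and B, and let τ be a circle representation of G. Let γ_1, …, γ_{2k} be the maximal A- and B-subwords of the circular subsequence γ of τ induced by A ∪ B. Then each subword γ_i contains each vertex at most once. -/
/-- The segment of the word `τ` strictly between the two occurrences of `u`. -/
def betweenOccs {V : Type*} [DecidableEq V] (τ : List V) (u : V) : List V :=
  ((τ.dropWhile (fun x => decide (x ≠ u))).drop 1).takeWhile (fun x => decide (x ≠ u))

/-- Two symbols `u` and `v` alternate in the circular word `τ` (i.e. their four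
occurrences appear in cyclic order `u, v, u, v`): exactly one of the two
occurrences of `v` lies strictly between the two occurrences of `u`. -/
def Alternates {V : Type*} [DecidableEq V] (τ : List V) (u v : V) : Prop :=
  (betweenOccs τ u).count v = 1

/-- `τ` is a circle representation of `G`: a circular word (modelled as a list read
cyclically) in which every vertex occurs exactly twice, and two distinct vertices are
adjacent iff their occurrences alternate. -/
def IsCircleRep {V : Type*} [DecidableEq V] (G : SimpleGraph V) (τ : List V) : Prop :=
  (∀ v : V, τ.count v = 2) ∧
  ∀ u v : V, u ≠ v → (G.Adj u v ↔ Alternates τ u v)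

/-- A split of `G` between `A` and `B`, with short sides `SA = 𝔰(A)` and `SB = 𝔰(B)`:
a partition of the vertices into four parts such that every vertex of `A` is adjacent
to every vertex of `B`, there are no edges between `SA` and `B ∪ SB` nor between
`SB` and `A ∪ SA`, and both sides have at least two vertices. -/
def IsSplit {V : Type*} [DecidableEq V] (G : SimpleGraph V) (A B SA SB : Finset V) : Prop :=
  (∀ v : V, v ∈ A ∪ B ∪ SA ∪ SB) ∧
  Disjoint A B ∧ Disjoint A SA ∧ Disjoint A SB ∧
  Disjoint B SA ∧ Disjoint B SB ∧ Disjoint SA SB ∧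
  (∀ a ∈ A, ∀ b ∈ B, G.Adj a b) ∧
  (∀ s ∈ SA, ∀ x ∈ B ∪ SB, ¬ G.Adj s x) ∧
  (∀ s ∈ SB, ∀ x ∈ A ∪ SA, ¬ G.Adj s x) ∧
  2 ≤ (A ∪ SA).card ∧ 2 ≤ (B ∪ SB).card

/-!
If `x` occurred twice in an `A`-word `γ i`, pick `b` in a `B`-word (the words are nonempty and
alternate, so one exists). Since `b` is adjacent to `x`, the occurrences of `x` and `b` alternate in
`τ`, hence also in `γ` (alternation survives deleting other symbols and rotating the word). But the
stretch of `γ` between the two occurrences of `x` lies inside `γ i`, which contains no `b`.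
-/

namespace List

variable {α : Type*} [DecidableEq α] {x : α}

lemma exists_eq_append_cons_of_count_eq_succ {n : ℕ} :
    ∀ {l : List α}, l.count x = n + 1 → ∃ p t, l = p ++ x :: t ∧ x ∉ p ∧ t.count x = n
  | [], h => by simp at h
  | a :: l, h => by
    by_cases hax : a = x
    · subst hax
      exact ⟨[], l, rfl, not_mem_nil, by simpa using h⟩
    · obtain ⟨p, t, rfl, hp, ht⟩ :=
        exists_eq_append_cons_of_count_eq_succ (l := l) (by simpa [count_cons, hax] using h)
      exact ⟨a :: p, t, rfl, by simp [Ne.symm hax, hp], ht⟩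

lemma exists_eq_append_cons_append_cons_of_count_eq_two {l : List α} (h : l.count x = 2) :
    ∃ p m s, l = p ++ x :: (m ++ x :: s) ∧ x ∉ p ∧ x ∉ m ∧ x ∉ s := by
  obtain ⟨p, t, rfl, hp, ht⟩ := exists_eq_append_cons_of_count_eq_succ h
  obtain ⟨m, s, rfl, hm, hs⟩ := exists_eq_append_cons_of_count_eq_succ ht
  exact ⟨p, m, s, rfl, hp, hm, count_eq_zero.1 hs⟩

end List

open List

section Alternation

variable {V : Type*} [DecidableEq V] {x v : V}

lemma betweenOccs_append_cons_append_cons {p m : List V} (hp : x ∉ p) (hm : x ∉ m)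
    (s : List V) : betweenOccs (p ++ x :: (m ++ x :: s)) x = m := by
  have hp' : p.dropWhile (fun y => decide (y ≠ x)) = [] :=
    dropWhile_eq_nil_iff.2 fun y hy => decide_eq_true (ne_of_mem_of_not_mem hy hp)
  have hm' : m.takeWhile (fun y => decide (y ≠ x)) = m :=
    takeWhile_eq_self_iff.2 fun y hy => decide_eq_true (ne_of_mem_of_not_mem hy hm)
  rw [betweenOccs, dropWhile_append, hp', isEmpty_nil, if_pos rfl,
    dropWhile_cons_of_neg (by simp), drop_one, tail_cons, takeWhile_append, hm',
    if_pos rfl, takeWhile_cons_of_neg (by simp), append_nil]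

lemma betweenOccs_filter {P : V → Bool} (hPx : P x) {τ : List V} (hx : τ.count x = 2) :
    betweenOccs (τ.filter P) x = (betweenOccs τ x).filter P := by
  obtain ⟨p, m, s, rfl, hp, hm, -⟩ := exists_eq_append_cons_append_cons_of_count_eq_two hx
  rw [betweenOccs_append_cons_append_cons hp hm]
  simpa [filter_append, hPx] using betweenOccs_append_cons_append_cons
    (fun h => hp (mem_of_mem_filter h)) (fun h => hm (mem_of_mem_filter h)) (s.filter P)

lemma alternates_filter_iff {P : V → Bool} (hPx : P x) (hPv : P v) {τ : List V}
    (hx : τ.count x = 2) : Alternates (τ.filter P) x v ↔ Alternates τ x v := by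
  rw [Alternates, Alternates, betweenOccs_filter hPx hx, count_filter hPv]

/-- Moving the first letter to the end either keeps the stretch between the two `x`'s or, when
that letter is `x` itself, replaces it by its complement; `v` occurs once in one iff in the
other. -/
lemma alternates_rotate_one_iff (hvx : v ≠ x) {l : List V} (hx : l.count x = 2)
    (hv : l.count v = 2) : Alternates (l.rotate 1) x v ↔ Alternates l x v := by
  obtain ⟨p, m, s, rfl, hp, hm, hs⟩ := exists_eq_append_cons_append_cons_of_count_eq_two hx
  rcases p with _ | ⟨a, p⟩
  · have hrot : (x :: (m ++ x :: s)).rotate 1 = m ++ x :: (s ++ x :: []) := by simp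
    have hsum : m.count v + s.count v = 2 := by
      simpa [count_cons, hvx.symm] using hv
    have hbetween := betweenOccs_append_cons_append_cons (not_mem_nil (a := x)) hm s
    rw [nil_append] at hbetween
    rw [Alternates, Alternates, nil_append, hrot, betweenOccs_append_cons_append_cons hm hs,
      hbetween]
    omega
  · have hrot : (a :: p ++ x :: (m ++ x :: s)).rotate 1 = p ++ x :: (m ++ x :: (s ++ [a])) := by
      simp
    rw [Alternates, Alternates, hrot,
      betweenOccs_append_cons_append_cons (fun h => hp (mem_cons_of_mem a h)) hm,
      betweenOccs_append_cons_append_cons hp hm]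

lemma List.IsRotated.alternates_iff {l l' : List V} (h : l ~r l') (hvx : v ≠ x)
    (hx : l.count x = 2) (hv : l.count v = 2) : Alternates l x v ↔ Alternates l' x v := by
  obtain ⟨n, rfl⟩ := h
  induction n with
  | zero => rw [rotate_zero]
  | succ n ih =>
    rw [← rotate_rotate, alternates_rotate_one_iff hvx, ih]
    · rwa [(rotate_perm l n).count_eq]
    · rwa [(rotate_perm l n).count_eq]

lemma not_alternates_of_infix {u l : List V} (hul : u <:+: l) (hl : l.count x = 2)
    (hu : u.count x = 2) (hv : v ∉ u) : ¬ Alternates l x v := by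
  obtain ⟨r, t, rfl⟩ := hul
  obtain ⟨p, m, s, rfl, hp, hm, -⟩ := exists_eq_append_cons_append_cons_of_count_eq_two hu
  have hr : x ∉ r := by
    rw [← count_eq_zero]
    simp only [count_append, count_cons_self] at hl
    omega
  have hl' : r ++ (p ++ x :: (m ++ x :: s)) ++ t = (r ++ p) ++ x :: (m ++ x :: (s ++ t)) := by
    simp
  rw [Alternates, hl', betweenOccs_append_cons_append_cons (by simp [hr, hp]) hm,
    count_eq_zero_of_not_mem fun h => hv (by simp [h])]
  exact zero_ne_one

end Alternation

lemma exists_adj_of_mem_alternating_words {V : Type*} [DecidableEq V] {G : SimpleGraph V}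
    {A B : Finset V} (hAB : ∀ a ∈ A, ∀ b ∈ B, G.Adj a b) {k i : ℕ} {γ : ℕ → List V} (hi : i < 2 * k)
    (hne : ∀ i < 2 * k, γ i ≠ [])
    (hAword : ∀ i < 2 * k, i % 2 = 0 → ∀ x ∈ γ i, x ∈ A)
    (hBword : ∀ i < 2 * k, i % 2 = 1 → ∀ x ∈ γ i, x ∈ B) :
    ∃ b ∈ A ∪ B, ∀ y ∈ γ i, G.Adj y b := by
  rcases Nat.mod_two_eq_zero_or_one i with h | h
  · obtain ⟨b, hb⟩ := exists_mem_of_ne_nil _ (hne 1 (by omega))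
    have hbB := hBword 1 (by omega) rfl b hb
    exact ⟨b, Finset.mem_union_right _ hbB, fun y hy => hAB y (hAword i hi h y hy) b hbB⟩
  · obtain ⟨a, ha⟩ := exists_mem_of_ne_nil _ (hne 0 (by omega))
    have haA := hAword 0 (by omega) rfl a ha
    exact ⟨a, Finset.mem_union_left _ haA, fun y hy => (hAB a haA y (hBword i hi h y hy)).symm⟩

theorem each_subword_contains_each_symbol_at_most_once_general
    {V : Type*} [DecidableEq V]
    (G : SimpleGraph V)
    (A B SA SB : Finset V) (hsplit : IsSplit G A B SA SB)
    (τ : List V) (hτ : IsCircleRep G τ)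
    (k : ℕ) (γ : ℕ → List V)
    (hjoin : ((List.range (2 * k)).map γ).flatten ~r
      τ.filter (fun x => decide (x ∈ A ∪ B)))
    (hne : ∀ i < 2 * k, γ i ≠ [])
    (hAword : ∀ i < 2 * k, i % 2 = 0 → ∀ x ∈ γ i, x ∈ A)
    (hBword : ∀ i < 2 * k, i % 2 = 1 → ∀ x ∈ γ i, x ∈ B) :
    ∀ i < 2 * k, ∀ x : V, (γ i).count x ≤ 1 := by
  intro i hi x
  by_contra! hx
  obtain ⟨-, -, -, -, -, -, -, hAB, -⟩ := hsplit
  set F := ((List.range (2 * k)).map γ).flatten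
  have hγF : γ i <:+: F := infix_of_mem_flatten (mem_map_of_mem (mem_range.2 hi))
  have hcount : ∀ y ∈ A ∪ B, F.count y = 2 := fun y hy => by
    rw [hjoin.perm.count_eq, count_filter (by simpa using hy), hτ.1 y]
  have hxγ : x ∈ γ i := count_pos_iff.1 (by omega)
  have hxAB : x ∈ A ∪ B := by
    simpa using (mem_filter.1 (hjoin.perm.subset (hγF.subset hxγ))).2
  obtain ⟨b, hbAB, hb⟩ := exists_adj_of_mem_alternating_words hAB hi hne hAword hBword
  have hbγ : b ∉ γ i := fun h => G.irrefl (hb b h)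
  have hxb : G.Adj x b := hb x hxγ
  have halt : Alternates F x b := by
    rw [hjoin.alternates_iff hxb.ne.symm (hcount x hxAB) (hcount b hbAB),
      alternates_filter_iff (by simpa using hxAB) (by simpa using hbAB) (hτ.1 x)]
    exact (hτ.2 x b hxb.ne).1 hxb
  exact not_alternates_of_infix hγF (hcount x hxAB)
    (le_antisymm (hcount x hxAB ▸ hγF.count_le x) hx) hbγ halt

/-- Lemma (group ordering, part (a)): in any circle representation `τ` of a connected
graph `G` with a split between `A` and `B`, each maximal `A`- or `B`-subword
`γ i` of the circular subsequence of `τ` induced by `A ∪ B` contains each vertex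
at most once. -/
theorem each_subword_contains_each_symbol_at_most_once
    {V : Type*} [DecidableEq V] [Fintype V]
    (G : SimpleGraph V) (hconn : G.Connected)
    (A B SA SB : Finset V) (hsplit : IsSplit G A B SA SB)
    (τ : List V) (hτ : IsCircleRep G τ)
    (k : ℕ) (γ : ℕ → List V)
    (hjoin : ((List.range (2 * k)).map γ).flatten ~r
      τ.filter (fun x => decide (x ∈ A ∪ B)))
    (hne : ∀ i < 2 * k, γ i ≠ [])
    (hAword : ∀ i < 2 * k, i % 2 = 0 → ∀ x ∈ γ i, x ∈ A)
    (hBword : ∀ i < 2 * k, i % 2 = 1 → ∀ x ∈ γ i, x ∈ B) :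
    ∀ i < 2 * k, ∀ x : V, (γ i).count x ≤ 1 :=
  each_subword_contains_each_symbol_at_most_once_general G A B SA SB hsplit τ hτ k γ hjoin hne
    hAword hBword
end

section
/- Let G be a connected finite simple graph with a split between A and B, let τ be a circle representation of G, and let γ_1, …, γ_{2k} be the maximal A- and B-subwords of the circular subsequence γ of τ induced by A ∪ B. Then for every index i there is a single index j such that for every vertex x occurring in γ_i, the second occurrence of x in γ lies in γ_j; that is, the second occurrences of all the symbols of γ_i are contained in one common subword. -/
/-!
Rotate the blocks so that `γ i` comes first. A symbol `x` of `γ i` is adjacent to every symbol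
of the other side of the split, so each of those occurs exactly once between the two occurrences
of `x`. Hence `x` occurs only once in `γ i`, its second occurrence lies in some block `γ q` of the
same side, and every symbol of the other side occurs exactly once in the blocks strictly between
`γ i` and `γ q`. If two symbols of `γ i` had their second occurrences in blocks `q < q'` (counted
from `γ i`), the symbols of the block right after `γ q` would occur twice before `γ q'`.
-/

namespace List

variable {α : Type*}

theorem IsRotated.flatten {l l' : List (List α)} (h : l ~r l') : l.flatten ~r l'.flatten := by
  obtain ⟨i, rfl⟩ := h
  have h := isRotated_append (l := (l.take (i % l.length)).flatten)
    (l' := (l.drop (i % l.length)).flatten)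
  rw [← flatten_append, take_append_drop, ← flatten_append] at h
  rw [rotate_eq_drop_append_take_mod]
  exact h

theorem rotate_range (n i : ℕ) : (range n).rotate i = (range n).map fun t => (i + t) % n := by
  apply ext_getElem (by simp)
  intro t h₁ h₂
  simp [getElem_rotate, Nat.add_comm]

variable [DecidableEq α] {u : α} {L : List α}

theorem exists_eq_append_cons_of_count_eq_one (h : L.count u = 1) :
    ∃ P S, L = P ++ u :: S ∧ u ∉ P ∧ u ∉ S := by
  obtain ⟨P, S, rfl⟩ := append_of_mem (count_pos_iff.1 (by omega : 0 < L.count u))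
  rw [count_append, count_cons_self] at h
  exact ⟨P, S, rfl, count_eq_zero.1 (by omega), count_eq_zero.1 (by omega)⟩

theorem exists_eq_append_cons_append_cons_of_count_eq_two_s3 (h : L.count u = 2) :
    ∃ P M S, L = P ++ u :: (M ++ u :: S) ∧ u ∉ P ∧ u ∉ M ∧ u ∉ S := by
  obtain ⟨P, R, rfl⟩ := append_of_mem (count_pos_iff.1 (by omega : 0 < L.count u))
  rw [count_append, count_cons_self] at h
  rcases Nat.eq_zero_or_pos (P.count u) with hP | hP
  · obtain ⟨M, S, rfl, hM, hS⟩ :=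
      exists_eq_append_cons_of_count_eq_one (by omega : R.count u = 1)
    exact ⟨P, M, S, rfl, count_eq_zero.1 hP, hM, hS⟩
  · obtain ⟨P', M, rfl, hP', hM⟩ :=
      exists_eq_append_cons_of_count_eq_one (by omega : P.count u = 1)
    exact ⟨P', M, R, by simp, hP', hM, count_eq_zero.1 (by omega)⟩

end List

open List

section Alternation

variable {V : Type*} [DecidableEq V] {u v : V} {P M S L : List V}

theorem betweenOccs_append_cons_append_cons_s3 (hP : u ∉ P) (hM : u ∉ M) :
    betweenOccs (P ++ u :: (M ++ u :: S)) u = M := by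
  have hP' : ∀ a ∈ P, decide (a ≠ u) = true := fun a ha => by
    simpa using ne_of_mem_of_not_mem ha hP
  have hM' : ∀ a ∈ M, decide (a ≠ u) = true := fun a ha => by
    simpa using ne_of_mem_of_not_mem ha hM
  rw [betweenOccs, dropWhile_append_of_pos hP', dropWhile_cons_of_neg (by simp), drop_one,
    tail_cons, takeWhile_append_of_pos hM', takeWhile_cons_of_neg (by simp), append_nil]

theorem alternates_append_cons_append_cons_iff (hP : u ∉ P) (hM : u ∉ M) :
    Alternates (P ++ u :: (M ++ u :: S)) u v ↔ M.count v = 1 := by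
  rw [Alternates, betweenOccs_append_cons_append_cons_s3 hP hM]

theorem not_alternates_self : ¬ Alternates L u u := by
  have : u ∉ betweenOccs L u := fun h => by simpa using mem_takeWhile_imp h
  rw [Alternates, count_eq_zero.2 this]
  simp

theorem alternates_cons_iff_append_singleton {a : V} (hu : (a :: L).count u = 2)
    (hv : (a :: L).count v = 2) :
    Alternates (a :: L) u v ↔ Alternates (L ++ [a]) u v := by
  rcases eq_or_ne u v with rfl | huv
  · exact iff_of_false not_alternates_self not_alternates_self
  by_cases ha : a = u
  · subst ha
    obtain ⟨P, S, rfl, hP, hS⟩ :=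
      exists_eq_append_cons_of_count_eq_one (by simpa using hu : L.count a = 1)
    have hPS : P.count v + S.count v = 2 := by simpa [count_cons, huv] using hv
    rw [← nil_append (a :: _), alternates_append_cons_append_cons_iff not_mem_nil hP,
      show P ++ a :: S ++ [a] = P ++ a :: (S ++ [a]) by simp,
      alternates_append_cons_append_cons_iff hP hS]
    omega
  · obtain ⟨P, M, S, rfl, hP, hM, -⟩ :=
      exists_eq_append_cons_append_cons_of_count_eq_two_s3 (by simpa [count_cons, ha] using hu :
        L.count u = 2)
    rw [← cons_append, alternates_append_cons_append_cons_iff (by simp [Ne.symm ha, hP]) hM,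
      show P ++ u :: (M ++ u :: S) ++ [a] = P ++ u :: (M ++ u :: (S ++ [a])) by simp,
      alternates_append_cons_append_cons_iff hP hM]

theorem List.IsRotated.alternates_iff_s3 {L' : List V} (h : L ~r L') (hu : L.count u = 2)
    (hv : L.count v = 2) : Alternates L u v ↔ Alternates L' u v := by
  obtain ⟨i, rfl⟩ := h
  induction i generalizing L with
  | zero => rw [rotate_zero]
  | succ i ih =>
    cases L with
    | nil => simp at hu
    | cons a L =>
      have hperm : (L ++ [a]).Perm (a :: L) := perm_append_singleton a L
      rw [rotate_cons_succ, alternates_cons_iff_append_singleton hu hv]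
      exact ih (hperm.count_eq u ▸ hu) (hperm.count_eq v ▸ hv)

theorem Alternates.filter {p : V → Bool} (h : Alternates L u v) (hu : L.count u = 2)
    (hpu : p u) (hpv : p v) : Alternates (L.filter p) u v := by
  obtain ⟨P, M, S, rfl, hP, hM, -⟩ := exists_eq_append_cons_append_cons_of_count_eq_two_s3 hu
  rw [alternates_append_cons_append_cons_iff hP hM] at h
  rw [filter_append, filter_cons_of_pos hpu, filter_append, filter_cons_of_pos hpu,
    alternates_append_cons_append_cons_iff (mt mem_of_mem_filter hP) (mt mem_of_mem_filter hM),
    count_filter hpv, h]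

theorem not_alternates_append_of_count_eq_two {L₁ L₂ : List V} (hu : L₁.count u = 2)
    (hv : v ∉ L₁) : ¬ Alternates (L₁ ++ L₂) u v := by
  obtain ⟨P, M, S, rfl, hP, hM, -⟩ := exists_eq_append_cons_append_cons_of_count_eq_two_s3 hu
  rw [show P ++ u :: (M ++ u :: S) ++ L₂ = P ++ u :: (M ++ u :: (S ++ L₂)) by simp,
    alternates_append_cons_append_cons_iff hP hM, count_eq_zero.2 (fun h => hv (by simp [h]))]
  simp

theorem alternates_append_iff_of_count_eq_one {L₁ L₂ R : List V} (h₁ : L₁.count u = 1)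
    (hM : u ∉ M) (h₂ : L₂.count u = 1) (hv₁ : v ∉ L₁) (hv₂ : v ∉ L₂) :
    Alternates (L₁ ++ M ++ L₂ ++ R) u v ↔ M.count v = 1 := by
  obtain ⟨P₁, S₁, rfl, hP₁, hS₁⟩ := exists_eq_append_cons_of_count_eq_one h₁
  obtain ⟨P₂, S₂, rfl, hP₂, -⟩ := exists_eq_append_cons_of_count_eq_one h₂
  rw [show P₁ ++ u :: S₁ ++ M ++ (P₂ ++ u :: S₂) ++ R
      = P₁ ++ u :: (S₁ ++ M ++ P₂ ++ u :: (S₂ ++ R)) by simp,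
    alternates_append_cons_append_cons_iff hP₁ (by simp [hS₁, hM, hP₂]), count_append,
    count_append, count_eq_zero.2 (show v ∉ S₁ from fun h => hv₁ (by simp [h])),
    count_eq_zero.2 (show v ∉ P₂ from fun h => hv₂ (by simp [h])), zero_add, add_zero]

end Alternation

def blockWord {α : Type*} (δ : ℕ → List α) (n : ℕ) : List α :=
  ((List.range n).map δ).flatten

section BlockWord

variable {α : Type*} (δ : ℕ → List α)

@[simp]
theorem blockWord_zero : blockWord δ 0 = [] := rfl

theorem blockWord_succ (n : ℕ) : blockWord δ (n + 1) = blockWord δ n ++ δ n := by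
  simp [blockWord, range_succ]

theorem blockWord_add (m n : ℕ) :
    blockWord δ (m + n) = blockWord δ m ++ blockWord (fun t => δ (m + t)) n := by
  simp [blockWord, range_add, Function.comp_def]

theorem mem_blockWord {δ : ℕ → List α} {n : ℕ} {x : α} :
    x ∈ blockWord δ n ↔ ∃ t < n, x ∈ δ t := by
  simp [blockWord]

theorem blockWord_prefix {m n : ℕ} (h : m ≤ n) : blockWord δ m <+: blockWord δ n := by
  obtain ⟨d, rfl⟩ := Nat.exists_eq_add_of_le h
  rw [blockWord_add]
  exact prefix_append _ _

theorem blockWord_eq_append_append_of_lt {q n : ℕ} (h : q < n) :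
    blockWord δ n =
      blockWord δ q ++ δ q ++ blockWord (fun t => δ (q + 1 + t)) (n - (q + 1)) := by
  rw [← blockWord_succ, ← blockWord_add, Nat.add_sub_cancel' h]

theorem blockWord_eq_head_append {n : ℕ} (hn : 0 < n) :
    blockWord δ n = δ 0 ++ blockWord (fun t => δ (1 + t)) (n - 1) := by
  simpa using blockWord_eq_append_append_of_lt δ hn

theorem blockWord_add_mod_isRotated (i n : ℕ) :
    blockWord (fun t => δ ((i + t) % n)) n ~r blockWord δ n := by
  have h : blockWord (fun t => δ ((i + t) % n)) n = (((range n).map δ).rotate i).flatten := by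
    rw [← map_rotate, rotate_range, map_map]
    rfl
  rw [h]
  exact (IsRotated.forall _ _).flatten

end BlockWord

theorem exists_add_mod_eq {i m n : ℕ} (hi : i < n) (hm : m < n) : ∃ t < n, (i + t) % n = m :=
  ⟨(m + (n - i)) % n, Nat.mod_lt _ (by omega), by
    rw [Nat.add_mod_mod, show i + (m + (n - i)) = m + n by omega, Nat.add_mod_right,
      Nat.mod_eq_of_lt hm]⟩

section AlternatingBlocks

variable {V : Type*} [DecidableEq V] {δ : ℕ → List V} {n : ℕ}

theorem count_block_zero_eq_one (hn : 1 < n) (hne : δ 1 ≠ []) (hdisj : (δ 0).Disjoint (δ 1))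
    {x : V} (hx : x ∈ δ 0) (hcount : (blockWord δ n).count x = 2)
    (halt : ∀ b ∈ δ 1, Alternates (blockWord δ n) x b) : (δ 0).count x = 1 := by
  obtain ⟨b, hb⟩ := exists_mem_of_ne_nil _ hne
  rw [blockWord_eq_head_append δ (by omega)] at hcount halt
  have hne2 : (δ 0).count x ≠ 2 := fun h2 =>
    not_alternates_append_of_count_eq_two h2 (fun hb0 => hdisj hb0 hb) (halt b hb)
  have hpos := count_pos_iff.2 hx
  rw [count_append] at hcount
  omega

theorem exists_second_block (hn : 1 < n) (hne : δ 1 ≠ [])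
    (hdisj : ∀ s < n, ∀ t < n, s % 2 ≠ t % 2 → (δ s).Disjoint (δ t))
    {x : V} (hx : x ∈ δ 0) (hcount : (blockWord δ n).count x = 2)
    (halt : ∀ t < n, t % 2 = 1 → ∀ b ∈ δ t, Alternates (blockWord δ n) x b) :
    ∃ q < n, q % 2 = 0 ∧ x ∈ δ q ∧ (∀ t < n, x ∈ δ t → t = 0 ∨ t = q) ∧
      ∀ t < n, t % 2 = 1 → ∀ b ∈ δ t, (blockWord δ q).count b = 1 := by
  have hx0 : (δ 0).count x = 1 :=
    count_block_zero_eq_one hn hne (hdisj 0 (by omega) 1 hn (by omega)) hx hcount (halt 1 hn rfl)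
  obtain ⟨t, ht, hxt⟩ : ∃ t < n - 1, x ∈ δ (1 + t) := by
    rw [blockWord_eq_head_append δ (by omega), count_append] at hcount
    rw [← mem_blockWord, ← count_pos_iff]
    omega
  set q := 1 + t
  have hq : q < n := by omega
  have hqeven : q % 2 = 0 := by
    by_contra hodd
    exact hdisj 0 (by omega) q hq (by omega) hx hxt
  have hWq := blockWord_eq_append_append_of_lt δ hq
  have hprefix := blockWord_eq_head_append δ (n := q) (by omega)
  rw [hprefix] at hWq
  obtain ⟨hmid, hxq, hsuffix⟩ :
      (blockWord (fun s => δ (1 + s)) (q - 1)).count x = 0 ∧ (δ q).count x = 1 ∧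
        (blockWord (fun s => δ (q + 1 + s)) (n - (q + 1))).count x = 0 := by
    have := count_pos_iff.2 hxt
    rw [hWq, count_append, count_append, count_append] at hcount
    omega
  refine ⟨q, hq, hqeven, hxt, fun s hs hxs => ?_, fun s hs hsodd b hb => ?_⟩
  · rcases lt_trichotomy s q with h | rfl | h
    · refine Or.inl (by_contra fun hs0 =>
        count_eq_zero.1 hmid (mem_blockWord.2 ⟨s - 1, ?_, ?_⟩))
      · omega
      · rwa [show 1 + (s - 1) = s by omega]
    · exact Or.inr rfl
    · refine absurd (mem_blockWord.2 ⟨s - (q + 1), ?_, ?_⟩) (count_eq_zero.1 hsuffix)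
      · omega
      · rwa [show q + 1 + (s - (q + 1)) = s by omega]
  · have hb0 : b ∉ δ 0 := fun h => hdisj 0 (by omega) s hs (by omega) h hb
    have hbq : b ∉ δ q := fun h => hdisj q hq s hs (by omega) h hb
    have hb1 := halt s hs hsodd b hb
    rw [hWq, alternates_append_iff_of_count_eq_one hx0 (count_eq_zero.1 hmid) hxq hb0 hbq]
      at hb1
    rw [hprefix, count_append, count_eq_zero.2 hb0, hb1]

theorem le_of_count_blockWord_eq_one {q₁ q₂ : ℕ} (hq₁ : q₁ % 2 = 0) (hq₂ : q₂ % 2 = 0)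
    (hlt : q₂ < n) (hne : ∀ t < n, δ t ≠ [])
    (h₁ : ∀ t < n, t % 2 = 1 → ∀ b ∈ δ t, (blockWord δ q₁).count b = 1)
    (h₂ : ∀ t < n, t % 2 = 1 → ∀ b ∈ δ t, (blockWord δ q₂).count b = 1) : q₂ ≤ q₁ := by
  by_contra! h
  obtain ⟨b, hb⟩ := exists_mem_of_ne_nil _ (hne (q₁ + 1) (by omega))
  have hle := (blockWord_prefix δ (by omega : q₁ + 2 ≤ q₂)).count_le b
  rw [blockWord_succ, blockWord_succ, count_append, count_append,
    h₁ (q₁ + 1) (by omega) (by omega) b hb, h₂ (q₁ + 1) (by omega) (by omega) b hb] at hle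
  have := count_pos_iff.2 hb
  omega

theorem exists_common_second_block (hn : 1 < n) (hne : ∀ t < n, δ t ≠ [])
    (hdisj : ∀ s < n, ∀ t < n, s % 2 ≠ t % 2 → (δ s).Disjoint (δ t))
    (hcount : ∀ x ∈ δ 0, (blockWord δ n).count x = 2)
    (halt : ∀ x ∈ δ 0, ∀ t < n, t % 2 = 1 → ∀ b ∈ δ t, Alternates (blockWord δ n) x b) :
    ∃ j < n, ∀ x ∈ δ 0, x ∈ δ j ∧ ∀ t < n, x ∈ δ t → t = 0 ∨ t = j := by
  obtain ⟨x₀, hx₀⟩ := exists_mem_of_ne_nil _ (hne 0 (by omega))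
  obtain ⟨j, hj, hjeven, -, -, hjcount⟩ := exists_second_block hn (hne 1 hn) hdisj hx₀
    (hcount x₀ hx₀) (halt x₀ hx₀)
  refine ⟨j, hj, fun x hx => ?_⟩
  obtain ⟨q, hq, hqeven, hxq, honly, hqcount⟩ := exists_second_block hn (hne 1 hn) hdisj hx
    (hcount x hx) (halt x hx)
  obtain rfl : q = j :=
    le_antisymm (le_of_count_blockWord_eq_one hjeven hqeven hq hne hjcount hqcount)
      (le_of_count_blockWord_eq_one hqeven hjeven hj hne hqcount hjcount)
  exact ⟨hxq, honly⟩

theorem exists_common_second_block_of_isRotated {γ : ℕ → List V} {W : List V} (heven : 2 ∣ n)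
    (hne : ∀ m < n, γ m ≠ [])
    (hdisj : ∀ m < n, ∀ m' < n, m % 2 ≠ m' % 2 → (γ m).Disjoint (γ m'))
    (hW : W ~r blockWord γ n) (hcount : ∀ m < n, ∀ z ∈ γ m, W.count z = 2)
    (halt : ∀ m < n, ∀ m' < n, m % 2 ≠ m' % 2 → ∀ z ∈ γ m, ∀ w ∈ γ m', Alternates W z w)
    {i : ℕ} (hi : i < n) :
    ∃ j < n, ∀ x ∈ γ i, x ∈ γ j ∧ ∀ m < n, x ∈ γ m → m = i ∨ m = j := by
  set δ : ℕ → List V := fun t => γ ((i + t) % n)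
  have hδ : ∀ t, (i + t) % n < n ∧ (i + t) % n % 2 = (i + t) % 2 :=
    fun t => ⟨Nat.mod_lt _ (by omega), Nat.mod_mod_of_dvd _ heven⟩
  have hWδ : W ~r blockWord δ n := hW.trans (blockWord_add_mod_isRotated γ i n).symm
  obtain ⟨j, hj, hmain⟩ := exists_common_second_block (δ := δ) (by omega)
    (fun t _ => hne _ (hδ t).1)
    (fun s _ t _ hst => hdisj _ (hδ s).1 _ (hδ t).1 (by rw [(hδ s).2, (hδ t).2]; omega))
    (fun x hx => hWδ.perm.count_eq x ▸ hcount _ (hδ 0).1 x hx)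
    (fun x hx t _ ht b hb =>
      (hWδ.alternates_iff_s3 (hcount _ (hδ 0).1 x hx) (hcount _ (hδ t).1 b hb)).1
        (halt _ (hδ 0).1 _ (hδ t).1 (by rw [(hδ 0).2, (hδ t).2]; omega) x hx b hb))
  refine ⟨(i + j) % n, (hδ j).1, fun x hx => ?_⟩
  obtain ⟨hxj, honly⟩ := hmain x (by simpa [δ, Nat.mod_eq_of_lt hi] using hx)
  refine ⟨hxj, fun m hm hxm => ?_⟩
  obtain ⟨t, ht, rfl⟩ := exists_add_mod_eq hi hm
  rcases honly t ht hxm with rfl | rfl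
  · simp [Nat.mod_eq_of_lt hi]
  · exact Or.inr rfl

end AlternatingBlocks

theorem SimpleGraph.adj_of_mem_of_mod_two_ne {V : Type*} {G : SimpleGraph V} {A B : Set V}
    {γ : ℕ → List V} {n : ℕ} (hAB : ∀ a ∈ A, ∀ b ∈ B, G.Adj a b)
    (hA : ∀ i < n, i % 2 = 0 → ∀ x ∈ γ i, x ∈ A) (hB : ∀ i < n, i % 2 = 1 → ∀ x ∈ γ i, x ∈ B)
    {m m' : ℕ} (hm : m < n) (hm' : m' < n) (h : m % 2 ≠ m' % 2) {z w : V} (hz : z ∈ γ m)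
    (hw : w ∈ γ m') : G.Adj z w := by
  rcases Nat.mod_two_eq_zero_or_one m with hm2 | hm2
  · exact hAB z (hA m hm hm2 z hz) w (hB m' hm' (by omega) w hw)
  · exact (hAB w (hA m' hm' (by omega) w hw) z (hB m hm hm2 z hz)).symm

/-- "The second occurrence of `x` lies in `γ j`" is encoded as: `x` occurs in `γ j` and in no
subword other than `γ i` and `γ j`. -/
theorem second_occurrences_in_common_subword_general
    {V : Type*} [DecidableEq V]
    (G : SimpleGraph V)
    (A B SA SB : Finset V) (hsplit : IsSplit G A B SA SB)
    (τ : List V) (hτ : IsCircleRep G τ)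
    (k : ℕ) (γ : ℕ → List V)
    (hjoin : ((List.range (2 * k)).map γ).flatten ~r
      τ.filter (fun x => decide (x ∈ A ∪ B)))
    (hne : ∀ i < 2 * k, γ i ≠ [])
    (hAword : ∀ i < 2 * k, i % 2 = 0 → ∀ x ∈ γ i, x ∈ A)
    (hBword : ∀ i < 2 * k, i % 2 = 1 → ∀ x ∈ γ i, x ∈ B) :
    ∀ i < 2 * k, ∃ j, j < 2 * k ∧
      ∀ x ∈ γ i, x ∈ γ j ∧ ∀ m < 2 * k, x ∈ γ m → m = i ∨ m = j := by
  obtain ⟨hcount, hadj⟩ := hτ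
  obtain ⟨-, -, -, -, -, -, -, hAB, -⟩ := hsplit
  have hcross {m m' z w} (hm : m < 2 * k) (hm' : m' < 2 * k) (h : m % 2 ≠ m' % 2) (hz : z ∈ γ m)
      (hw : w ∈ γ m') : G.Adj z w :=
    G.adj_of_mem_of_mod_two_ne (A := A) (B := B) hAB hAword hBword hm hm' h hz hw
  have hside {m z} (hm : m < 2 * k) (hz : z ∈ γ m) : decide (z ∈ A ∪ B) = true := by
    rcases Nat.mod_two_eq_zero_or_one m with h | h
    · simp [hAword m hm h z hz]
    · simp [hBword m hm h z hz]
  intro i hi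
  refine exists_common_second_block_of_isRotated (dvd_mul_right 2 k) hne
    (fun m hm m' hm' h z hz hz' => G.irrefl (hcross hm hm' h hz hz')) hjoin.symm
    (fun m hm z hz => by
      rw [count_filter (p := fun x => decide (x ∈ A ∪ B)) (hside hm hz), hcount]) ?_ hi
  intro m hm m' hm' h z hz w hw
  have hzw := hcross hm hm' h hz hw
  exact ((hadj z w hzw.ne).1 hzw).filter (hcount z) (hside hm hz) (hside hm' hw)

/-- For every subword `γ i` there is a single index `j` such that the second
occurrences of all the symbols of `γ i` are contained in the one subword `γ j`:
every `x` occurring in `γ i` also occurs in `γ j`, and occurs in no subword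
other than `γ i` and `γ j`. -/
theorem second_occurrences_in_common_subword
    {V : Type*} [DecidableEq V] [Fintype V]
    (G : SimpleGraph V) (hconn : G.Connected)
    (A B SA SB : Finset V) (hsplit : IsSplit G A B SA SB)
    (τ : List V) (hτ : IsCircleRep G τ)
    (k : ℕ) (γ : ℕ → List V)
    (hjoin : ((List.range (2 * k)).map γ).flatten ~r
      τ.filter (fun x => decide (x ∈ A ∪ B)))
    (hne : ∀ i < 2 * k, γ i ≠ [])
    (hAword : ∀ i < 2 * k, i % 2 = 0 → ∀ x ∈ γ i, x ∈ A)
    (hBword : ∀ i < 2 * k, i % 2 = 1 → ∀ x ∈ γ i, x ∈ B) :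
    ∀ i < 2 * k, ∃ j, j < 2 * k ∧
      ∀ x ∈ γ i, x ∈ γ j ∧ ∀ m < 2 * k, x ∈ γ m → m = i ∨ m = j :=
  second_occurrences_in_common_subword_general G A B SA SB hsplit τ hτ k γ hjoin hne hAword hBword
end

section
/- Let G be a connected finite simple graph with a split between A and B, and let ∼ be the equivalence relation on A ∪ B generated by conditions (C1) and (C2). Then every equivalence class of ∼ is either fully contained in A or fully contained in B. -/
/-- The base relation `∼` on `A ∪ B`: `x ∼ y` if `x` and `y` are distinct
non-adjacent vertices of `A ∪ B` (condition (C1)), or if `x` and `y` are connected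
by a path with at least one internal vertex, all of whose internal vertices lie in
`SA ∪ SB = 𝔰(A) ∪ 𝔰(B)` (condition (C2)). -/
def SplitRel {V : Type*} [DecidableEq V] (G : SimpleGraph V) (A B SA SB : Finset V)
    (x y : V) : Prop :=
  x ∈ A ∪ B ∧ y ∈ A ∪ B ∧
  ((x ≠ y ∧ ¬ G.Adj x y) ∨
    ∃ p : G.Walk x y, p.IsPath ∧ 2 ≤ p.length ∧
      ∀ w ∈ p.support, w ≠ x → w ≠ y → w ∈ SA ∪ SB)

/-- `Φ` is an equivalence class of the equivalence relation on `A ∪ B` generated by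
the conditions (C1) and (C2). -/
def IsClass {V : Type*} [DecidableEq V] (G : SimpleGraph V) (A B SA SB : Finset V)
    (Φ : Set V) : Prop :=
  ∃ x, x ∈ A ∪ B ∧
    Φ = {y | y ∈ A ∪ B ∧ Relation.EqvGen (SplitRel G A B SA SB) x y}


/-! A relation of type (C1) between `A` and `B` is excluded because `A` is complete to `B`.
A path of type (C2) from `x ∈ A` must leave `x` into `𝔰(A)`, as `𝔰(B)` has no neighbour in `A`;
from there it can never cross to `𝔰(B)` or `B`, so it cannot end in `B`. Hence each generating
pair lies on one side of the split, and so does every pair in the generated equivalence. -/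

namespace IsSplit

variable {V : Type*} [DecidableEq V] {G : SimpleGraph V} {A B SA SB : Finset V}

theorem adj_of_mem_of_mem (h : IsSplit G A B SA SB) {a b : V} (ha : a ∈ A) (hb : b ∈ B) :
    G.Adj a b :=
  h.2.2.2.2.2.2.2.1 a ha b hb

theorem not_adj_of_mem_SA (h : IsSplit G A B SA SB) {s x : V} (hs : s ∈ SA) (hx : x ∈ B ∪ SB) :
    ¬ G.Adj s x :=
  h.2.2.2.2.2.2.2.2.1 s hs x hx

theorem not_adj_of_mem_SB (h : IsSplit G A B SA SB) {s x : V} (hs : s ∈ SB) (hx : x ∈ A ∪ SA) :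
    ¬ G.Adj s x :=
  h.2.2.2.2.2.2.2.2.2.1 s hs x hx

theorem not_mem_SA_of_mem_B (h : IsSplit G A B SA SB) {x : V} (hx : x ∈ B) : x ∉ SA :=
  Finset.disjoint_left.mp h.2.2.2.2.1 hx

theorem not_mem_B_of_walk_from_SA (h : IsSplit G A B SA SB) {s y : V} (q : G.Walk s y)
    (hs : s ∈ SA) (hq : ∀ w ∈ q.support, w ≠ y → w ∈ SA ∪ SB) : y ∉ B := by
  intro hy
  obtain ⟨d, hd, hfst, hsnd⟩ :=
    q.exists_boundary_dart (SA : Set V) hs (Finset.mem_coe.not.mpr (h.not_mem_SA_of_mem_B hy))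
  have hsnd_mem : d.snd ∈ B ∪ SB := by
    by_cases hdy : d.snd = y
    · exact Finset.mem_union_left _ (hdy ▸ hy)
    · have := hq _ (q.dart_snd_mem_support_of_mem_darts hd) hdy
      exact Finset.mem_union_right _ ((Finset.mem_union.mp this).resolve_left hsnd)
  exact h.not_adj_of_mem_SA hfst hsnd_mem d.adj

theorem not_splitRel_of_mem_of_mem (h : IsSplit G A B SA SB) {x y : V} (hx : x ∈ A)
    (hy : y ∈ B) : ¬ SplitRel G A B SA SB x y := by
  rintro ⟨-, -, ⟨-, hnadj⟩ | ⟨p, hp, hlen, hinner⟩⟩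
  · exact hnadj (h.adj_of_mem_of_mem hx hy)
  cases p with
  | nil => simp at hlen
  | @cons _ b _ hxb q =>
    have hxq : x ∉ q.support := ((SimpleGraph.Walk.cons_isPath_iff _ _).mp hp).2
    have hbx : b ≠ x := fun e => hxq (e ▸ q.start_mem_support)
    have hby : b ≠ y := by
      rintro rfl
      have : q.length = 0 := SimpleGraph.Walk.length_eq_zero_iff.mpr
        (SimpleGraph.Walk.isPath_iff_nil.mp hp.of_cons)
      simp [this] at hlen
    have hb : b ∈ SA := by
      refine (Finset.mem_union.mp (hinner b (by simp) hbx hby)).resolve_right fun hbSB => ?_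
      exact h.not_adj_of_mem_SB hbSB (Finset.mem_union_left _ hx) hxb.symm
    refine h.not_mem_B_of_walk_from_SA q hb (fun w hw hwy => ?_) hy
    exact hinner w (by simp [hw]) (fun e => hxq (e ▸ hw)) hwy

end IsSplit

theorem SplitRel.symm {V : Type*} [DecidableEq V] {G : SimpleGraph V} {A B SA SB : Finset V}
    {x y : V} (h : SplitRel G A B SA SB x y) : SplitRel G A B SA SB y x := by
  obtain ⟨hx, hy, ⟨hxy, hnadj⟩ | ⟨p, hp, hlen, hinner⟩⟩ := h
  · exact ⟨hy, hx, Or.inl ⟨hxy.symm, fun hadj => hnadj hadj.symm⟩⟩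
  · refine ⟨hy, hx, Or.inr ⟨p.reverse, hp.reverse, by simpa using hlen, fun w hw hwy hwx => ?_⟩⟩
    exact hinner w (by simpa using hw) hwx hwy

theorem IsSplit.mem_A_iff_of_splitRel {V : Type*} [DecidableEq V] {G : SimpleGraph V}
    {A B SA SB : Finset V} (h : IsSplit G A B SA SB) {x y : V} (hxy : SplitRel G A B SA SB x y) :
    x ∈ A ↔ y ∈ A := by
  have preserves : ∀ {u v}, SplitRel G A B SA SB u v → u ∈ A → v ∈ A := fun huv hu =>
    (Finset.mem_union.mp huv.2.1).resolve_right (h.not_splitRel_of_mem_of_mem hu · huv)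
  exact ⟨preserves hxy, preserves hxy.symm⟩

theorem classes_contained_in_A_or_B_general
    {V : Type*} [DecidableEq V]
    (G : SimpleGraph V)
    (A B SA SB : Finset V) (hsplit : IsSplit G A B SA SB) :
    ∀ x y : V, x ∈ A ∪ B → y ∈ A ∪ B →
      Relation.EqvGen (SplitRel G A B SA SB) x y → (x ∈ A ↔ y ∈ A) := by
  intro x y _ _ hxy
  have hiff : Equivalence fun u v : V => (u ∈ A ↔ v ∈ A) := ⟨fun _ => Iff.rfl, Iff.symm, Iff.trans⟩
  exact hiff.eqvGen_iff.mp (hxy.mono fun _ _ => hsplit.mem_A_iff_of_splitRel)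

/-- Every equivalence class of the equivalence relation `∼` on `A ∪ B` generated by
(C1) and (C2) is either fully contained in `A` or fully contained in `B`. -/
theorem classes_contained_in_A_or_B
    {V : Type*} [DecidableEq V] [Fintype V]
    (G : SimpleGraph V) (hconn : G.Connected)
    (A B SA SB : Finset V) (hsplit : IsSplit G A B SA SB) :
    ∀ x y : V, x ∈ A ∪ B → y ∈ A ∪ B →
      Relation.EqvGen (SplitRel G A B SA SB) x y → (x ∈ A ↔ y ∈ A) :=
  classes_contained_in_A_or_B_general G A B SA SB hsplit
end

section
/- Let G be a connected finite simple graph with a split between A and B, and let ∼ be the equivalence relation on A ∪ B generated by conditions (C1) and (C2). Then every connected component of G − (A ∪ B) contains a vertex adjacent to a vertex of exactly one equivalence class of ∼; consequently, the sets 𝔰(Φ), taken over all equivalence classes Φ of ∼, form a partition of 𝔰(A) ∪ 𝔰(B). -/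
/-- `C` is the vertex set of a connected component of `G − (A ∪ B)`: it is a nonempty
set of vertices outside `A ∪ B`, any two of its vertices are joined by a walk staying
inside `C`, and it is closed under adjacency to vertices outside `A ∪ B`. -/
def OutsideComp {V : Type*} [DecidableEq V] (G : SimpleGraph V) (A B : Finset V)
    (C : Finset V) : Prop :=
  C.Nonempty ∧ (∀ v ∈ C, v ∉ A ∧ v ∉ B) ∧
  (∀ u ∈ C, ∀ v ∈ C, ∃ p : G.Walk u v, ∀ w ∈ p.support, w ∈ C) ∧
  (∀ u ∈ C, ∀ v : V, G.Adj u v → v ∉ A → v ∉ B → v ∈ C)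

/-- `𝔰(Φ)`: the union of the vertex sets of the connected components of
`G − (A ∪ B)` containing a vertex adjacent to a vertex of `Φ`. -/
def sClass {V : Type*} [DecidableEq V] (G : SimpleGraph V) (A B : Finset V)
    (Φ : Set V) : Set V :=
  {v | ∃ C : Finset V, OutsideComp G A B C ∧ v ∈ C ∧ ∃ c ∈ C, ∃ u ∈ Φ, G.Adj c u}

/-!
Let `C` be a component of `G − (A ∪ B)`. The set `A ∪ B` is nonempty, since otherwise `𝔰(A)` and
`𝔰(B)` would be nonempty with no edge between them; as `G` is connected, some edge leaves `C`, and
it ends in `A ∪ B`. Two distinct neighbours `u`, `u'` of `C` in `A ∪ B` are joined by a path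
`u, c, …, c', u'` whose internal vertices lie in `C ⊆ 𝔰(A) ∪ 𝔰(B)`, so `u ∼ u'` by (C2). Thus the
neighbours of `C` in `A ∪ B` meet exactly one class. Since the components of `G − (A ∪ B)`
partition `𝔰(A) ∪ 𝔰(B)`, so do the sets `𝔰(Φ)`.
-/

namespace SimpleGraph

variable {V : Type*} {G : SimpleGraph V}

theorem Preconnected.exists_adj_mem_notMem (hG : G.Preconnected) {S : Set V} {u v : V}
    (hu : u ∈ S) (hv : v ∉ S) : ∃ x ∈ S, ∃ y ∉ S, G.Adj x y := by
  obtain ⟨p⟩ := hG u v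
  obtain ⟨d, -, hx, hy⟩ := p.exists_boundary_dart S hu hv
  exact ⟨d.fst, hx, d.snd, hy, d.adj⟩

theorem Walk.exists_isPath_through [DecidableEq V] {S : Set V} {u c c' u' : V}
    (q : G.Walk c c') (hq : ∀ z ∈ q.support, z ∈ S) (hu : u ∉ S) (hu' : u' ∉ S) (hne : u ≠ u')
    (hc : G.Adj u c) (hc' : G.Adj c' u') :
    ∃ p : G.Walk u u', p.IsPath ∧ 2 ≤ p.length ∧ ∀ w ∈ p.support, w ≠ u → w ≠ u' → w ∈ S := by
  have hr : ∀ z ∈ q.bypass.support, z ∈ S := fun z hz =>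
    hq z (q.support_bypass_subset_support hz)
  refine ⟨cons hc (q.bypass.concat hc'),
    (q.bypass_isPath.concat (fun h => hu' (hr _ h)) hc').cons ?_, by simp [length_concat], ?_⟩
  · rw [support_concat, List.mem_append, List.mem_singleton]
    rintro (h | h)
    exacts [hu (hr _ h), hne h]
  · intro w hw hwu hwu'
    simp only [support_cons, support_concat, List.mem_cons, List.mem_append,
      List.not_mem_nil, or_false] at hw
    rcases hw with rfl | hw | rfl
    exacts [(hwu rfl).elim, hr w hw, (hwu' rfl).elim]

end SimpleGraph

section

open SimpleGraph

variable {V : Type*} [DecidableEq V] {G : SimpleGraph V} {A B SA SB : Finset V}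

theorem IsSplit.mem_union_short_iff (h : IsSplit G A B SA SB) {v : V} :
    v ∈ SA ∪ SB ↔ v ∉ A ∧ v ∉ B := by
  obtain ⟨hcover, -, hASA, hASB, hBSA, hBSB, -⟩ := h
  have hv := hcover v
  simp only [Finset.mem_union] at hv ⊢
  constructor
  · rintro (hv | hv)
    · exact ⟨Finset.disjoint_right.mp hASA hv, Finset.disjoint_right.mp hBSA hv⟩
    · exact ⟨Finset.disjoint_right.mp hASB hv, Finset.disjoint_right.mp hBSB hv⟩
  · tauto

theorem IsSplit.union_nonempty (h : IsSplit G A B SA SB) (hG : G.Preconnected) :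
    (A ∪ B).Nonempty := by
  obtain ⟨hcover, -, -, -, -, -, hSASB, -, hSA, -, hcardA, hcardB⟩ := h
  by_contra hAB
  rw [Finset.not_nonempty_iff_eq_empty, Finset.union_eq_empty] at hAB
  obtain ⟨rfl, rfl⟩ := hAB
  obtain ⟨s, hs⟩ : SA.Nonempty := Finset.card_pos.mp (by simp at hcardA; omega)
  obtain ⟨t, ht⟩ : SB.Nonempty := Finset.card_pos.mp (by simp at hcardB; omega)
  obtain ⟨x, hx, y, hy, hxy⟩ :=
    hG.exists_adj_mem_notMem (S := SA) hs (Finset.disjoint_right.mp hSASB ht)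
  have hy' : y ∈ SB := (by simpa using hcover y : y ∈ SA ∨ y ∈ SB).resolve_left hy
  exact hSA x hx y (Finset.mem_union_right _ hy') hxy

namespace OutsideComp

variable {C C' : Finset V}

theorem notMem_union (hC : OutsideComp G A B C) {v : V} (hv : v ∈ C) : v ∉ A ∪ B := by
  simpa [not_or] using hC.2.1 v hv

theorem mem_of_walk (hC : OutsideComp G A B C) {x y : V} (p : G.Walk x y) (hx : x ∈ C)
    (hp : ∀ z ∈ p.support, z ∉ A ∧ z ∉ B) : y ∈ C := by
  by_contra hy
  obtain ⟨d, hd, hfst, hsnd⟩ := p.exists_boundary_dart C hx hy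
  have hd' := hp _ (p.dart_snd_mem_support_of_mem_darts hd)
  exact hsnd (hC.2.2.2 _ hfst _ d.adj hd'.1 hd'.2)

theorem eq_of_mem (hC : OutsideComp G A B C) (hC' : OutsideComp G A B C') {v : V}
    (hv : v ∈ C) (hv' : v ∈ C') : C = C' := by
  have subset : ∀ {D D' : Finset V}, OutsideComp G A B D → OutsideComp G A B D' →
      v ∈ D → v ∈ D' → D ⊆ D' := fun hD hD' hvD hvD' u hu => by
    obtain ⟨p, hp⟩ := hD.2.2.1 v hvD u hu
    exact hD'.mem_of_walk p hvD' fun z hz => hD.2.1 z (hp z hz)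
  exact subset_antisymm (subset hC hC' hv hv') (subset hC' hC hv' hv)

theorem exists_adj_mem_union (hC : OutsideComp G A B C) (hG : G.Preconnected)
    (hAB : (A ∪ B).Nonempty) : ∃ c ∈ C, ∃ u ∈ A ∪ B, G.Adj c u := by
  obtain ⟨c₀, hc₀⟩ := hC.1
  obtain ⟨a, ha⟩ := hAB
  obtain ⟨c, hc, u, hu, hcu⟩ :=
    hG.exists_adj_mem_notMem (S := C) hc₀ fun haC => hC.notMem_union haC ha
  refine ⟨c, hc, u, ?_, hcu⟩
  by_contra huAB
  rw [Finset.mem_union, not_or] at huAB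
  exact hu (hC.2.2.2 c hc u hcu huAB.1 huAB.2)

theorem eqvGen_of_adj (hsplit : IsSplit G A B SA SB) (hC : OutsideComp G A B C)
    {c c' u u' : V} (hc : c ∈ C) (hc' : c' ∈ C) (hu : u ∈ A ∪ B) (hu' : u' ∈ A ∪ B)
    (hcu : G.Adj c u) (hcu' : G.Adj c' u') :
    Relation.EqvGen (SplitRel G A B SA SB) u u' := by
  by_cases hne : u = u'
  · exact hne ▸ Relation.EqvGen.refl u
  obtain ⟨q, hq⟩ := hC.2.2.1 c hc c' hc'
  obtain ⟨p, hp, hlen, hint⟩ := q.exists_isPath_through (S := C) hq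
    (fun h => hC.notMem_union h hu) (fun h => hC.notMem_union h hu') hne hcu.symm hcu'
  refine Relation.EqvGen.rel _ _ ⟨hu, hu', Or.inr ⟨p, hp, hlen, fun w hw hwu hwu' => ?_⟩⟩
  exact hsplit.mem_union_short_iff.mpr (hC.2.1 w (hint w hw hwu hwu'))

end OutsideComp

theorem exists_outsideComp_mem [Fintype V] {v : V} (hvA : v ∉ A) (hvB : v ∉ B) :
    ∃ C : Finset V, OutsideComp G A B C ∧ v ∈ C := by
  classical
  let avoids : ∀ {x y : V}, G.Walk x y → Prop := fun p => ∀ z ∈ p.support, z ∉ A ∧ z ∉ B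
  have hnil : avoids (Walk.nil : G.Walk v v) := by simpa [avoids] using ⟨hvA, hvB⟩
  refine ⟨Finset.univ.filter fun u => ∃ p : G.Walk v u, avoids p,
    ⟨⟨v, by simpa using ⟨_, hnil⟩⟩, ?_, ?_, ?_⟩, by simpa using ⟨_, hnil⟩⟩ <;>
    simp only [Finset.mem_filter, Finset.mem_univ, true_and]
  · rintro u ⟨p, hp⟩
    exact hp u p.end_mem_support
  · rintro u ⟨p, hp⟩ u' ⟨p', hp'⟩
    have prefix_avoids : ∀ {u : V} (p : G.Walk v u), avoids p → ∀ z ∈ p.support,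
        ∃ r : G.Walk v z, avoids r := fun p hp z hz =>
      ⟨p.takeUntil z hz, fun w hw => hp w (p.support_takeUntil_subset_support hz hw)⟩
    refine ⟨p.reverse.append p', fun z hz => ?_⟩
    rw [Walk.support_append, Walk.support_reverse, List.mem_append, List.mem_reverse] at hz
    rcases hz with hz | hz
    exacts [prefix_avoids p hp z hz, prefix_avoids p' hp' z (List.mem_of_mem_tail hz)]
  · rintro u ⟨p, hp⟩ x hux hxA hxB
    refine ⟨p.concat hux, fun z hz => ?_⟩
    rw [Walk.support_concat, List.mem_append, List.mem_singleton] at hz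
    rcases hz with hz | rfl
    exacts [hp z hz, ⟨hxA, hxB⟩]

def splitClass (G : SimpleGraph V) (A B SA SB : Finset V) (x : V) : Set V :=
  {y | y ∈ A ∪ B ∧ Relation.EqvGen (SplitRel G A B SA SB) x y}

theorem isClass_splitClass {x : V} (hx : x ∈ A ∪ B) :
    IsClass G A B SA SB (splitClass G A B SA SB x) :=
  ⟨x, hx, rfl⟩

theorem mem_splitClass_self {x : V} (hx : x ∈ A ∪ B) : x ∈ splitClass G A B SA SB x :=
  ⟨hx, Relation.EqvGen.refl x⟩

theorem splitClass_eq_of_eqvGen {x y : V} (h : Relation.EqvGen (SplitRel G A B SA SB) x y) :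
    splitClass G A B SA SB x = splitClass G A B SA SB y := by
  have e := Relation.EqvGen.is_equivalence (SplitRel G A B SA SB)
  ext z
  exact and_congr_right fun _ => ⟨e.trans (e.symm h), e.trans h⟩

theorem IsClass.mem_union {Φ : Set V} (hΦ : IsClass G A B SA SB Φ) {u : V} (hu : u ∈ Φ) :
    u ∈ A ∪ B := by
  obtain ⟨x, -, rfl⟩ := hΦ
  exact hu.1

theorem IsClass.eq_splitClass {Φ : Set V} (hΦ : IsClass G A B SA SB Φ) {u : V} (hu : u ∈ Φ) :
    Φ = splitClass G A B SA SB u := by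
  obtain ⟨x, -, rfl⟩ := hΦ
  exact splitClass_eq_of_eqvGen hu.2

theorem OutsideComp.existsUnique_isClass_adj (hG : G.Connected) (hsplit : IsSplit G A B SA SB)
    {C : Finset V} (hC : OutsideComp G A B C) :
    ∃! Φ : Set V, IsClass G A B SA SB Φ ∧ ∃ c ∈ C, ∃ u ∈ Φ, G.Adj c u := by
  obtain ⟨c, hc, u, hu, hcu⟩ :=
    hC.exists_adj_mem_union hG.preconnected (hsplit.union_nonempty hG.preconnected)
  refine ⟨_, ⟨isClass_splitClass hu, c, hc, u, mem_splitClass_self hu, hcu⟩, ?_⟩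
  rintro Ψ ⟨hΨ, c', hc', u', hu', hcu'⟩
  rw [hΨ.eq_splitClass hu']
  exact splitClass_eq_of_eqvGen (hC.eqvGen_of_adj hsplit hc' hc (hΨ.mem_union hu') hu hcu' hcu)

end

/-- Every connected component of `G − (A ∪ B)` contains a vertex adjacent to a vertex
of exactly one equivalence class of `∼`; consequently the sets `𝔰(Φ)`, taken over
all equivalence classes `Φ` of `∼`, form a partition of `𝔰(A) ∪ 𝔰(B)`. -/
theorem sClass_partition
    {V : Type*} [DecidableEq V] [Fintype V]
    (G : SimpleGraph V) (hconn : G.Connected)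
    (A B SA SB : Finset V) (hsplit : IsSplit G A B SA SB) :
    (∀ C : Finset V, OutsideComp G A B C →
      ∃! Φ : Set V, IsClass G A B SA SB Φ ∧ ∃ c ∈ C, ∃ u ∈ Φ, G.Adj c u) ∧
    (∀ Φ Φ' : Set V, IsClass G A B SA SB Φ → IsClass G A B SA SB Φ' → Φ ≠ Φ' →
      Disjoint (sClass G A B Φ) (sClass G A B Φ')) ∧
    (⋃ Φ ∈ {Ψ : Set V | IsClass G A B SA SB Ψ}, sClass G A B Φ) = (↑SA ∪ ↑SB : Set V) := by
  have unique := fun C (hC : OutsideComp G A B C) => hC.existsUnique_isClass_adj hconn hsplit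
  refine ⟨unique, ?_, ?_⟩
  · intro Φ Φ' hΦ hΦ' hne
    refine Set.disjoint_left.mpr ?_
    rintro v ⟨C, hC, hvC, hΦC⟩ ⟨C', hC', hvC', hΦ'C'⟩
    obtain rfl := hC.eq_of_mem hC' hvC hvC'
    exact hne ((unique C hC).unique ⟨hΦ, hΦC⟩ ⟨hΦ', hΦ'C'⟩)
  · ext v
    simp only [Set.mem_iUnion, Set.mem_ofPred_eq, exists_prop, ← Finset.coe_union,
      Finset.mem_coe, hsplit.mem_union_short_iff]
    constructor
    · rintro ⟨Φ, -, C, hC, hvC, -⟩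
      exact hC.2.1 v hvC
    · rintro ⟨hvA, hvB⟩
      obtain ⟨C, hC, hvC⟩ := exists_outsideComp_mem (G := G) hvA hvB
      obtain ⟨Φ, ⟨hΦ, hΦC⟩, -⟩ := unique C hC
      exact ⟨Φ, hΦ, C, hC, hvC, hΦC⟩
end

section
/- Let G be a connected finite simple graph with a split between A and B, and let ∼ be the equivalence relation on A ∪ B generated by conditions (C1) and (C2). If Φ and Φ′ are two distinct equivalence classes of ∼, then every vertex of Φ is adjacent in G to every vertex of Φ′. -/
/-- If `Φ` and `Φ'` are two distinct equivalence classes of `∼`, then every vertex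
of `Φ` is adjacent in `G` to every vertex of `Φ'`. -/
theorem distinct_classes_completely_adjacent
    {V : Type*} [DecidableEq V] [Fintype V]
    (G : SimpleGraph V) (hconn : G.Connected)
    (A B SA SB : Finset V) (hsplit : IsSplit G A B SA SB) :
    ∀ Φ Φ' : Set V, IsClass G A B SA SB Φ → IsClass G A B SA SB Φ' → Φ ≠ Φ' →
      ∀ x ∈ Φ, ∀ y ∈ Φ', G.Adj x y := by
  rintro Φ Φ' ⟨a, ha, rfl⟩ ⟨b, hb, rfl⟩ hne x hx y hy
  by_contra hadj
  apply hne
  -- x and y are related by the base relation (or equal)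
  have hxy : Relation.EqvGen (SplitRel G A B SA SB) x y := by
    rcases eq_or_ne x y with rfl | hxyne
    · exact Relation.EqvGen.refl x
    · exact Relation.EqvGen.rel _ _ ⟨hx.1, hy.1, Or.inl ⟨hxyne, hadj⟩⟩
  have hab : Relation.EqvGen (SplitRel G A B SA SB) a b :=
    Relation.EqvGen.trans _ _ _ (Relation.EqvGen.trans _ _ _ hx.2 hxy)
      (Relation.EqvGen.symm _ _ hy.2)
  ext z
  constructor
  · rintro ⟨hz, haz⟩
    exact ⟨hz, Relation.EqvGen.trans _ _ _ (Relation.EqvGen.symm _ _ hab) haz⟩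
  · rintro ⟨hz, hbz⟩; exact ⟨hz, Relation.EqvGen.trans _ _ _ hab hbz⟩
end

section
/- Let G be a connected finite simple graph with a split between A and B. Let G_A be the graph obtained from the subgraph of G induced by A ∪ 𝔰(A) by adding a new vertex v_A adjacent to exactly the vertices of A, and let G_B be obtained analogously from B ∪ 𝔰(B) with a new vertex v_B adjacent to exactly the vertices of B. If the circular word v_A τ_A v_A τ̂_A is a circle representation of G_A and the circular word v_B τ_B v_B τ̂_B is a circle representation of G_B, then the circular word τ_A τ_B τ̂_A τ̂_B is a circle representation of G. -/
/-- `τ` is a circle representation of the graph `G` restricted to the vertex set `s`: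
every vertex of `s` occurs exactly twice in the circular word `τ`, no other vertex
occurs, and two distinct vertices of `s` are adjacent iff their occurrences alternate. -/
def IsCircleRepOn {W : Type*} [DecidableEq W] (G : SimpleGraph W) (s : Set W)
    (τ : List W) : Prop :=
  (∀ v ∈ s, τ.count v = 2) ∧ (∀ v ∈ τ, v ∈ s) ∧
  ∀ u v : W, u ∈ s → v ∈ s → u ≠ v → (G.Adj u v ↔ Alternates τ u v)

/-- The graph obtained from the subgraph of `G` induced by `Φ ∪ S` by adding a new
vertex (modelled as `none`) adjacent to exactly the vertices of `Φ`.  It is a graph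
on `Option V`; only the vertices `some '' (Φ ∪ S) ∪ {none}` are relevant. -/
def attachGraph {V : Type*} (G : SimpleGraph V) (Φ S : Set V) : SimpleGraph (Option V) :=
  SimpleGraph.fromRel (fun u v =>
    match u, v with
    | some a, some b => a ∈ Φ ∪ S ∧ b ∈ Φ ∪ S ∧ G.Adj a b
    | some a, none => a ∈ Φ
    | _, _ => False)

/-!
In the word `v_A τ_A v_A τ̂_A` representing `G_A`, a vertex `u` of `A ∪ 𝔰(A)` alternates with
`v_A` iff one of its occurrences lies in `τ_A` and the other in `τ̂_A`; since `v_A` is adjacent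
exactly to `A`, this happens iff `u ∈ A`. The word `τ_A τ_B τ̂_A τ̂_B` is obtained from
`τ_A v_A τ̂_A` by substituting `τ_B` for `v_A` and appending `τ̂_B`, so the segment between the
occurrences of `u` is the old segment with `τ_B` substituted for `v_A`. Hence two vertices of
`A ∪ 𝔰(A)` alternate iff they did in `G_A`, while `u ∈ A ∪ 𝔰(A)` and `w ∈ B ∪ 𝔰(B)` alternate iff
`u ∈ A` and `w` occurs once in `τ_B`, i.e. iff `u ∈ A` and `w ∈ B`, which is adjacency across a
split. The vertices of `B ∪ 𝔰(B)` are handled in the same way, substituting `τ̂_A` for `v_B`.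
-/

section BetweenOccs

variable {α : Type*} [DecidableEq α]

theorem List.exists_eq_append_cons_of_mem {u : α} {l : List α} (h : u ∈ l) :
    ∃ p r, l = p ++ u :: r ∧ u ∉ p := by
  induction l with
  | nil => simp at h
  | cons a t ih =>
    by_cases hau : a = u
    · exact ⟨[], t, by simp [hau], by simp⟩
    · obtain ⟨p, r, rfl, hp⟩ := ih (by simpa [Ne.symm hau] using h)
      exact ⟨a :: p, r, rfl, by simp [hp, Ne.symm hau]⟩

theorem List.exists_eq_append_cons_append_cons_of_count_eq_two_s9 {u : α} {l : List α}
    (h : l.count u = 2) : ∃ p q r, l = p ++ u :: (q ++ u :: r) ∧ u ∉ p ∧ u ∉ q := by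
  obtain ⟨p, t, rfl, hp⟩ :=
    List.exists_eq_append_cons_of_mem (List.count_pos_iff.mp (show 0 < l.count u by omega))
  have ht : u ∈ t := List.count_pos_iff.mp <| by
    simp only [List.count_append, List.count_eq_zero.mpr hp, List.count_cons_self] at h
    omega
  obtain ⟨q, r, rfl, hq⟩ := List.exists_eq_append_cons_of_mem ht
  exact ⟨p, q, r, rfl, hp, hq⟩

theorem betweenOccs_sublist (l : List α) (u : α) : (betweenOccs l u).Sublist l :=
  (List.takeWhile_sublist _).trans ((List.drop_sublist _ _).trans (List.dropWhile_sublist _))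

theorem betweenOccs_append_of_notMem {u : α} {p : List α} (hp : u ∉ p) (l : List α) :
    betweenOccs (p ++ l) u = betweenOccs l u := by
  unfold betweenOccs
  rw [List.dropWhile_append_of_pos fun a ha => by simpa using ne_of_mem_of_not_mem ha hp]

theorem betweenOccs_cons_self (u : α) (l : List α) :
    betweenOccs (u :: l) u = l.takeWhile (fun x => decide (x ≠ u)) := by
  simp [betweenOccs]

theorem betweenOccs_eq_of_eq_append {u : α} {l p q r : List α}
    (hl : l = p ++ u :: (q ++ u :: r)) (hp : u ∉ p) (hq : u ∉ q) : betweenOccs l u = q := by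
  rw [hl, betweenOccs_append_of_notMem hp, betweenOccs_cons_self,
    List.takeWhile_append_of_pos fun a ha => by simpa using ne_of_mem_of_not_mem ha hq]
  simp

theorem betweenOccs_append_of_count_eq_two {u : α} {l : List α} (h : l.count u = 2)
    (r : List α) : betweenOccs (l ++ r) u = betweenOccs l u := by
  obtain ⟨p, q, r', rfl, hp, hq⟩ := List.exists_eq_append_cons_append_cons_of_count_eq_two_s9 h
  rw [betweenOccs_eq_of_eq_append rfl hp hq,
    betweenOccs_eq_of_eq_append (r := r' ++ r) (by simp) hp hq]

theorem List.takeWhile_flatMap {β : Type*} [DecidableEq β] {φ : β → List α} {u : α} {b₀ : β}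
    (h₀ : φ b₀ = [u]) (h : ∀ b, b ≠ b₀ → u ∉ φ b) (w : List β) :
    (w.flatMap φ).takeWhile (fun x => decide (x ≠ u)) =
      (w.takeWhile (fun b => decide (b ≠ b₀))).flatMap φ := by
  induction w with
  | nil => rfl
  | cons b w ih =>
    by_cases hb : b = b₀
    · subst hb; simp [h₀]
    · rw [List.flatMap_cons, List.takeWhile_append_of_pos
        fun a ha => by simpa using ne_of_mem_of_not_mem ha (h b hb), ih]
      simp [hb]

theorem betweenOccs_flatMap {β : Type*} [DecidableEq β] {φ : β → List α} {u : α} {b₀ : β}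
    (h₀ : φ b₀ = [u]) (h : ∀ b, b ≠ b₀ → u ∉ φ b) (w : List β) :
    betweenOccs (w.flatMap φ) u = (betweenOccs w b₀).flatMap φ := by
  induction w with
  | nil => rfl
  | cons b w ih =>
    by_cases hb : b = b₀
    · subst hb
      rw [List.flatMap_cons, h₀, List.singleton_append, betweenOccs_cons_self,
        betweenOccs_cons_self, List.takeWhile_flatMap h₀ h]
    · rw [List.flatMap_cons, betweenOccs_append_of_notMem (h b hb), ih,
        ← List.singleton_append, betweenOccs_append_of_notMem (by simpa using Ne.symm hb)]

theorem count_betweenOccs_separator {x y : α} {l r : List α} (hyl : y ∉ l) (hyr : y ∉ r)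
    (hx : l.count x + r.count x = 2) :
    (betweenOccs (l ++ y :: r) x).count y = if l.count x = 1 then 1 else 0 := by
  have hxy : x ≠ y := by
    rintro rfl
    simp [List.count_eq_zero.mpr hyl, List.count_eq_zero.mpr hyr] at hx
  rcases (show l.count x = 0 ∨ l.count x = 1 ∨ l.count x = 2 by omega) with h | h | h
  · rw [← List.singleton_append, ← List.append_assoc,
      betweenOccs_append_of_notMem (by simpa using ⟨List.count_eq_zero.mp h, hxy⟩),
      if_neg (by omega), List.count_eq_zero]
    exact fun hy => hyr ((betweenOccs_sublist r x).subset hy)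
  · obtain ⟨p, q, rfl, hp⟩ :=
      List.exists_eq_append_cons_of_mem (List.count_pos_iff.mp (show 0 < l.count x by omega))
    obtain ⟨p', q', rfl, hp'⟩ := List.exists_eq_append_cons_of_mem
      (List.count_pos_iff.mp (show 0 < r.count x by omega))
    have hq : x ∉ q := by
      simpa [List.count_eq_zero.mpr hp, List.count_eq_zero] using h
    rw [betweenOccs_eq_of_eq_append (q := q ++ y :: p') (r := q') (by simp) hp
      (by simp [hq, hxy, hp']), if_pos h]
    simp_all [List.count_eq_zero.mpr]
  · rw [betweenOccs_append_of_count_eq_two h, if_neg (by omega), List.count_eq_zero]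
    exact fun hy => hyl ((betweenOccs_sublist l x).subset hy)

end BetweenOccs

section Join

variable {V : Type*} [DecidableEq V]

-- Counts in `List (Option V)` must use the `BEq` instance that `Alternates` uses.
attribute [-instance] instBEqOption Option.instBEq

def attachWord (l r : List V) : List (Option V) :=
  none :: l.map some ++ none :: r.map some

@[simp]
theorem List.count_map_some (l : List V) (u : V) : (l.map some).count (some u) = l.count u :=
  List.count_map_of_injective _ _ (Option.some_injective V) u

theorem count_flatMap_optionElim (L : List (Option V)) (m : List V) (v : V) :
    (L.flatMap fun o => o.elim m ([·])).count v = L.count (some v) + L.count none * m.count v := by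
  induction L with
  | nil => simp
  | cons o L ih =>
    cases o with
    | none => simp [ih]; ring
    | some x => simp [List.count_cons, ih]; ring

theorem betweenOccs_attachWord (u : V) (l r : List V) :
    betweenOccs (attachWord l r) (some u) =
      betweenOccs (l.map some ++ none :: r.map some) (some u) :=
  betweenOccs_append_of_notMem (p := [none]) (by simp) _

theorem count_none_betweenOccs_attachWord {u : V} {l r : List V}
    (hu : l.count u + r.count u = 2) :
    (betweenOccs (attachWord l r) (some u)).count none = if l.count u = 1 then 1 else 0 := by
  rw [betweenOccs_attachWord, count_betweenOccs_separator (by simp) (by simp) (by simpa using hu)]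
  simp

theorem alternates_attachWord_none_iff {u : V} {l r : List V}
    (hu : l.count u + r.count u = 2) :
    Alternates (attachWord l r) (some u) none ↔ l.count u = 1 := by
  rw [Alternates, count_none_betweenOccs_attachWord hu]
  split_ifs <;> simp_all

theorem betweenOccs_join {u : V} {pre l mid r : List V} (post : List V)
    (hpre : u ∉ pre) (hmid : u ∉ mid) (hu : l.count u + r.count u = 2) :
    betweenOccs (pre ++ l ++ mid ++ r ++ post) u =
      (betweenOccs (attachWord l r) (some u)).flatMap fun o => o.elim mid ([·]) := by
  set φ : Option V → List V := fun o => o.elim mid ([·])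
  have hword : pre ++ l ++ mid ++ r ++ post =
      pre ++ ((l.map some ++ none :: r.map some).flatMap φ ++ post) := by
    simp [φ, List.flatMap_append, List.flatMap_map]
  have hcount : ((l.map some ++ none :: r.map some).flatMap φ).count u = 2 := by
    simp [φ, count_flatMap_optionElim, List.count_eq_zero.mpr hmid, hu]
  rw [hword, betweenOccs_append_of_notMem hpre, betweenOccs_append_of_count_eq_two hcount,
    betweenOccs_flatMap (b₀ := some u) rfl, betweenOccs_attachWord]
  rintro (_ | x) hx
  · exact hmid
  · simpa [φ, eq_comm] using hx

theorem alternates_join_iff_of_notMem_mid {u v : V} {pre l mid r : List V} (post : List V)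
    (hpre : u ∉ pre) (hmid : u ∉ mid) (hu : l.count u + r.count u = 2) (hv : v ∉ mid) :
    Alternates (pre ++ l ++ mid ++ r ++ post) u v ↔
      Alternates (attachWord l r) (some u) (some v) := by
  rw [Alternates, Alternates, betweenOccs_join post hpre hmid hu, count_flatMap_optionElim,
    List.count_eq_zero.mpr hv, mul_zero, add_zero]

theorem alternates_join_iff_of_notMem {u v : V} {pre l mid r : List V} (post : List V)
    (hpre : u ∉ pre) (hmid : u ∉ mid) (hu : l.count u + r.count u = 2)
    (hvl : v ∉ l) (hvr : v ∉ r) :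
    Alternates (pre ++ l ++ mid ++ r ++ post) u v ↔ l.count u = 1 ∧ mid.count v = 1 := by
  have hv : (betweenOccs (attachWord l r) (some u)).count (some v) = 0 :=
    List.count_eq_zero.mpr fun h => by
      simpa [attachWord, hvl, hvr] using (betweenOccs_sublist _ _).subset h
  rw [Alternates, betweenOccs_join post hpre hmid hu, count_flatMap_optionElim, hv,
    count_none_betweenOccs_attachWord hu]
  split_ifs <;> simp_all

end Join

section Attach

variable {V : Type*} {G : SimpleGraph V} {Φ S : Set V} {a b : V}

theorem attachGraph_adj_some_some (ha : a ∈ Φ ∪ S) (hb : b ∈ Φ ∪ S) :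
    (attachGraph G Φ S).Adj (some a) (some b) ↔ G.Adj a b := by
  simp only [attachGraph, SimpleGraph.fromRel_adj, ne_eq, Option.some.injEq]
  exact ⟨fun ⟨_, h⟩ => h.elim (·.2.2) (·.2.2.symm), fun h => ⟨G.ne_of_adj h, .inl ⟨ha, hb, h⟩⟩⟩

theorem attachGraph_adj_some_none : (attachGraph G Φ S).Adj (some a) none ↔ a ∈ Φ := by
  simp [attachGraph, SimpleGraph.fromRel_adj]

end Attach

def IsAttachRep {V : Type*} [DecidableEq V] (G : SimpleGraph V) (X S : Finset V) (l r : List V) : Prop :=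
  IsCircleRepOn (attachGraph G ↑X ↑S) (insert none (some '' (↑X ∪ ↑S))) (attachWord l r)

namespace IsAttachRep

variable {V : Type*} [DecidableEq V] {G : SimpleGraph V} {X S : Finset V} {l r : List V} {u v : V}

theorem count_add_count_eq_two (h : IsAttachRep G X S l r) (hu : u ∈ X ∪ S) :
    l.count u + r.count u = 2 := by
  simpa [attachWord, List.count_cons] using h.1 (some u) (by simpa using hu)

theorem notMem_of_notMem_union (h : IsAttachRep G X S l r) (hu : u ∉ X ∪ S) :
    u ∉ l ∧ u ∉ r := by
  have hw : some u ∉ attachWord l r := fun h' => hu (by simpa using h.2.1 _ h')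
  simpa [attachWord, not_or] using hw

theorem mem_iff_count_eq_one (h : IsAttachRep G X S l r) (hu : u ∈ X ∪ S) :
    u ∈ X ↔ l.count u = 1 := by
  rw [← Finset.mem_coe, ← attachGraph_adj_some_none (G := G) (S := ↑S),
    h.2.2 _ _ (by simpa using hu) (Set.mem_insert _ _) (by simp),
    alternates_attachWord_none_iff (h.count_add_count_eq_two hu)]

theorem adj_iff_alternates (h : IsAttachRep G X S l r) (hu : u ∈ X ∪ S) (hv : v ∈ X ∪ S)
    (huv : u ≠ v) : G.Adj u v ↔ Alternates (attachWord l r) (some u) (some v) := by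
  rw [← attachGraph_adj_some_some (Φ := ↑X) (S := ↑S) (by simpa using hu) (by simpa using hv),
    h.2.2 _ _ (by simpa using hu) (by simpa using hv) (by simpa)]

end IsAttachRep

namespace IsSplit

variable {V : Type*} [DecidableEq V] {G : SimpleGraph V} {A B SA SB : Finset V}

theorem mem_or_mem (h : IsSplit G A B SA SB) (v : V) : v ∈ A ∪ SA ∨ v ∈ B ∪ SB := by
  have := h.1 v
  simp only [Finset.mem_union] at this ⊢
  tauto

theorem disjoint (h : IsSplit G A B SA SB) : Disjoint (A ∪ SA) (B ∪ SB) := by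
  obtain ⟨-, hAB, -, hASB, hBSA, -, hSASB, -⟩ := h
  simp only [Finset.disjoint_union_left, Finset.disjoint_union_right]
  exact ⟨⟨hAB, hBSA.symm⟩, hASB, hSASB⟩

theorem adj_iff (h : IsSplit G A B SA SB) {u v : V} (hu : u ∈ A ∪ SA) (hv : v ∈ B ∪ SB) :
    G.Adj u v ↔ u ∈ A ∧ v ∈ B := by
  obtain ⟨-, -, -, -, -, -, -, hAB, hSA, hSB, -⟩ := h
  rw [Finset.mem_union] at hu hv
  refine ⟨fun huv => ?_, fun ⟨hu, hv⟩ => hAB u hu v hv⟩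
  rcases hu with hu | hu
  · rcases hv with hv | hv
    · exact ⟨hu, hv⟩
    · exact (hSB v hv u (Finset.mem_union_left _ hu) huv.symm).elim
  · exact (hSA u hu v (Finset.mem_union.mpr hv) huv).elim

end IsSplit

theorem join_of_split_representations_general
    {V : Type*} [DecidableEq V]
    (G : SimpleGraph V)
    (A B SA SB : Finset V) (hsplit : IsSplit G A B SA SB)
    (τA τA' τB τB' : List V)
    (hA : IsCircleRepOn (attachGraph G ↑A ↑SA) (insert none (some '' (↑A ∪ ↑SA)))
      (none :: τA.map some ++ none :: τA'.map some))
    (hB : IsCircleRepOn (attachGraph G ↑B ↑SB) (insert none (some '' (↑B ∪ ↑SB)))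
      (none :: τB.map some ++ none :: τB'.map some)) :
    IsCircleRep G (τA ++ τB ++ τA' ++ τB') := by
  replace hA : IsAttachRep G A SA τA τA' := hA
  replace hB : IsAttachRep G B SB τB τB' := hB
  have notMemB {u : V} (hu : u ∈ A ∪ SA) :=
    hB.notMem_of_notMem_union (Finset.disjoint_left.mp hsplit.disjoint hu)
  have notMemA {u : V} (hu : u ∈ B ∪ SB) :=
    hA.notMem_of_notMem_union (Finset.disjoint_right.mp hsplit.disjoint hu)
  refine ⟨fun v => ?_, fun u v huv => ?_⟩
  · rcases hsplit.mem_or_mem v with hv | hv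
    · simpa [List.count_eq_zero.mpr (notMemB hv).1, List.count_eq_zero.mpr (notMemB hv).2,
        add_right_comm] using hA.count_add_count_eq_two hv
    · simpa [List.count_eq_zero.mpr (notMemA hv).1, List.count_eq_zero.mpr (notMemA hv).2,
        add_right_comm] using hB.count_add_count_eq_two hv
  · rcases hsplit.mem_or_mem u with hu | hu <;> rcases hsplit.mem_or_mem v with hv | hv
    · rw [hA.adj_iff_alternates hu hv huv]
      simpa using (alternates_join_iff_of_notMem_mid (pre := []) τB' (by simp) (notMemB hu).1
        (hA.count_add_count_eq_two hu) (notMemB hv).1).symm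
    · rw [hsplit.adj_iff hu hv, hA.mem_iff_count_eq_one hu, hB.mem_iff_count_eq_one hv]
      simpa using (alternates_join_iff_of_notMem (pre := []) τB' (by simp) (notMemB hu).1
        (hA.count_add_count_eq_two hu) (notMemA hv).1 (notMemA hv).2).symm
    · rw [← List.append_nil (τA ++ τB ++ τA' ++ τB'), alternates_join_iff_of_notMem []
        (notMemA hu).1 (notMemA hu).2 (hB.count_add_count_eq_two hu) (notMemB hv).1
        (notMemB hv).2, G.adj_comm, hsplit.adj_iff hv hu, hA.mem_iff_count_eq_one hv,
        hB.mem_iff_count_eq_one hu]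
      have := hA.count_add_count_eq_two hv
      omega
    · rw [← List.append_nil (τA ++ τB ++ τA' ++ τB'), alternates_join_iff_of_notMem_mid []
        (notMemA hu).1 (notMemA hu).2 (hB.count_add_count_eq_two hu) (notMemA hv).2,
        hB.adj_iff_alternates hu hv huv]

/-- Joining circle representations of the two sides of a split.  Here
`G_A = attachGraph G ↑A ↑SA` is the graph on `A ∪ 𝔰(A)` together with a new vertex
`v_A = none` adjacent to exactly the vertices of `A`, and similarly for `G_B`.
If `v_A τ_A v_A τ̂_A` represents `G_A` and `v_B τ_B v_B τ̂_B` represents `G_B`,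
then `τ_A τ_B τ̂_A τ̂_B` is a circle representation of `G`. -/
theorem join_of_split_representations
    {V : Type*} [DecidableEq V] [Fintype V]
    (G : SimpleGraph V) (hconn : G.Connected)
    (A B SA SB : Finset V) (hsplit : IsSplit G A B SA SB)
    (τA τA' τB τB' : List V)
    (hA : IsCircleRepOn (attachGraph G ↑A ↑SA) (insert none (some '' (↑A ∪ ↑SA)))
      (none :: τA.map some ++ none :: τA'.map some))
    (hB : IsCircleRepOn (attachGraph G ↑B ↑SB) (insert none (some '' (↑B ∪ ↑SB)))
      (none :: τB.map some ++ none :: τB'.map some)) :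
    IsCircleRep G (τA ++ τB ++ τA' ++ τB') :=
  join_of_split_representations_general G A B SA SB hsplit τA τA' τB τB' hA hB
end
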